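/- Diffusion-to-flow transformation: let p₀ be a data density, define the diffusion marginal p_τ(y) = ∫ p₀(x₀) N(y; ᾱ_τ x₀, σ_τ² I) dx₀ and the flow-matching velocity v*(x,t) = E[x₁ − x₀ | (1−t)x₀ + t x₁ = x] with x₀ ∼ N(0,I) independent of x₁ ∼ p₀. Then for t = 1/(1 + σ_τ/ᾱ_τ), (1−t)·v*(x, t) = (σ_τ/ᾱ_τ)·(x + σ_τ ∇ log p_τ((ᾱ_τ + σ_τ)x)). -/

import Mathlib

/-!
With `t = ᾱ/(ᾱ+σ)` one has `(ᾱ+σ)·t = ᾱ` and `(ᾱ+σ)(1−t) = σ`, so rescaling the Gaussian kernel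
shows `p_τ((ᾱ+σ)x) = (ᾱ+σ)^{-d} q_t(x)` with `q_t` the flow-matching marginal, and the score of
`p_τ` at `(ᾱ+σ)x` is `(ᾱ/σ²) E[x₁ − x] − x/σ` under the flow posterior of `x₁` given `x_t = x`.
Since also `(1−t) v*(x,t) = E[x₁ − x]`, both sides of the identity equal `E[x₁ − x]`.
-/

open Real MeasureTheory

noncomputable section

/-- Isotropic Gaussian density `N(μ, c²I)` on `ℝ^d`, evaluated at `x`. -/
def gaussDen (d : ℕ) (x μ : EuclideanSpace ℝ (Fin d)) (c : ℝ) : ℝ :=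
  (2 * π * c ^ 2) ^ (-(d : ℝ) / 2) * Real.exp (-‖x - μ‖ ^ 2 / (2 * c ^ 2))

/-- Diffusion marginal `p_τ(y) = ∫ p₀(x₀) N(y; ᾱ x₀, σ²I) dx₀`. -/
def diffMarginal (d : ℕ) (p₀ : EuclideanSpace ℝ (Fin d) → ℝ) (α σ : ℝ)
    (y : EuclideanSpace ℝ (Fin d)) : ℝ :=
  ∫ x₀, p₀ x₀ * gaussDen d y (α • x₀) σ

/-- Flow-matching marginal at time `t`: since `x₀ ∼ N(0,I)` independent of `x₁ ∼ p₀`,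
`x_t | x₁ ∼ N(t x₁, (1−t)²I)`, so `q_t(x) = ∫ p₀(x₁) N(x; t x₁, (1−t)²I) dx₁`. -/
def fmMarginal (d : ℕ) (p₀ : EuclideanSpace ℝ (Fin d) → ℝ) (t : ℝ)
    (x : EuclideanSpace ℝ (Fin d)) : ℝ :=
  ∫ x₁, p₀ x₁ * gaussDen d x (t • x₁) (1 - t)

/-- Flow-matching velocity `v*(x,t) = E[x₁ − x₀ | (1−t)x₀ + t x₁ = x]`, written via the
Bayes posterior over `x₁` (with `x₀ = (x − t x₁)/(1−t)` along the interpolation). -/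
def fmVelocity (d : ℕ) (p₀ : EuclideanSpace ℝ (Fin d) → ℝ) (t : ℝ)
    (x : EuclideanSpace ℝ (Fin d)) : EuclideanSpace ℝ (Fin d) :=
  (fmMarginal d p₀ t x)⁻¹ •
    ∫ x₁, (p₀ x₁ * gaussDen d x (t • x₁) (1 - t)) • (x₁ - (1 - t)⁻¹ • (x - t • x₁))

end

section

variable {d : ℕ}

lemma gaussDen_smul_smul_mul {k : ℝ} (hk : k ≠ 0) (x μ : EuclideanSpace ℝ (Fin d)) (c : ℝ) :
    gaussDen d (k • x) (k • μ) (k * c) = (k ^ 2) ^ (-(d : ℝ) / 2) * gaussDen d x μ c := by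
  have hnorm : ‖k • x - k • μ‖ ^ 2 = k ^ 2 * ‖x - μ‖ ^ 2 := by
    rw [← smul_sub, norm_smul, Real.norm_eq_abs, mul_pow, sq_abs]
  have hexp : -(k ^ 2 * ‖x - μ‖ ^ 2) / (2 * (k * c) ^ 2) = -‖x - μ‖ ^ 2 / (2 * c ^ 2) := by
    rcases eq_or_ne c 0 with rfl | hc
    · simp
    · field_simp
  unfold gaussDen
  rw [hnorm, hexp, show 2 * π * (k * c) ^ 2 = k ^ 2 * (2 * π * c ^ 2) by ring,
    Real.mul_rpow (sq_nonneg k) (by positivity), mul_assoc]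

lemma gaussDen_diffusion_eq_flow {α σ : ℝ} (hk : α + σ ≠ 0) (x x₀ : EuclideanSpace ℝ (Fin d)) :
    gaussDen d ((α + σ) • x) (α • x₀) σ
      = ((α + σ) ^ 2) ^ (-(d : ℝ) / 2) * gaussDen d x ((α / (α + σ)) • x₀) (1 - α / (α + σ)) := by
  rw [← gaussDen_smul_smul_mul hk, smul_smul, mul_div_cancel₀ _ hk,
    mul_sub, mul_one, mul_div_cancel₀ _ hk, add_sub_cancel_left]

/-- Unnormalised posterior density of `x₁` given `x_t = x` under the linear interpolation. -/
noncomputable def fmWeight (d : ℕ) (p₀ : EuclideanSpace ℝ (Fin d) → ℝ) (t : ℝ)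
    (x x₁ : EuclideanSpace ℝ (Fin d)) : ℝ :=
  p₀ x₁ * gaussDen d x (t • x₁) (1 - t)

lemma fmMarginal_eq_integral_fmWeight (p₀ : EuclideanSpace ℝ (Fin d) → ℝ) (t : ℝ)
    (x : EuclideanSpace ℝ (Fin d)) : fmMarginal d p₀ t x = ∫ x₁, fmWeight d p₀ t x x₁ :=
  rfl

lemma diffMarginal_smul_eq_fmMarginal (p₀ : EuclideanSpace ℝ (Fin d) → ℝ) {α σ : ℝ}
    (hk : α + σ ≠ 0) (x : EuclideanSpace ℝ (Fin d)) :
    diffMarginal d p₀ α σ ((α + σ) • x)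
      = ((α + σ) ^ 2) ^ (-(d : ℝ) / 2) * fmMarginal d p₀ (α / (α + σ)) x := by
  rw [diffMarginal, fmMarginal, ← integral_const_mul]
  congr 1 with x₀
  rw [gaussDen_diffusion_eq_flow hk]
  ring

lemma sub_inv_smul_interpolant {t : ℝ} (ht : t ≠ 1) (x x₁ : EuclideanSpace ℝ (Fin d)) :
    x₁ - (1 - t)⁻¹ • (x - t • x₁) = (1 - t)⁻¹ • (x₁ - x) := by
  have h : 1 - t ≠ 0 := sub_ne_zero.mpr ht.symm
  match_scalars <;> field_simp <;> ring

lemma smul_fmVelocity (p₀ : EuclideanSpace ℝ (Fin d) → ℝ) {t : ℝ} (ht : t ≠ 1)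
    (x : EuclideanSpace ℝ (Fin d)) :
    (1 - t) • fmVelocity d p₀ t x
      = (fmMarginal d p₀ t x)⁻¹ • ∫ x₁, fmWeight d p₀ t x x₁ • (x₁ - x) := by
  have h : 1 - t ≠ 0 := sub_ne_zero.mpr ht.symm
  simp only [fmVelocity, sub_inv_smul_interpolant ht, smul_comm _ (1 - t)⁻¹, integral_smul]
  rw [smul_smul, mul_comm, smul_smul, mul_inv_cancel₀ h, one_mul]
  rfl

lemma integrable_fmVelocity_integrand_iff (p₀ : EuclideanSpace ℝ (Fin d) → ℝ) {t : ℝ} (ht : t ≠ 1)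
    (x : EuclideanSpace ℝ (Fin d)) :
    Integrable (fun x₁ => (p₀ x₁ * gaussDen d x (t • x₁) (1 - t)) • (x₁ - (1 - t)⁻¹ • (x - t • x₁)))
      ↔ Integrable (fun x₁ => fmWeight d p₀ t x x₁ • (x₁ - x)) := by
  simp only [sub_inv_smul_interpolant ht, smul_comm _ (1 - t)⁻¹]
  exact integrable_smul_iff (inv_ne_zero (sub_ne_zero.mpr ht.symm)) _

lemma integral_diffusion_score_eq (p₀ : EuclideanSpace ℝ (Fin d) → ℝ) {α σ : ℝ} (hσ : σ ≠ 0)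
    (hk : α + σ ≠ 0) (x : EuclideanSpace ℝ (Fin d))
    (hW : Integrable (fmWeight d p₀ (α / (α + σ)) x))
    (hWx : Integrable fun x₁ => fmWeight d p₀ (α / (α + σ)) x x₁ • (x₁ - x)) :
    ∫ x₀, ((p₀ x₀ * gaussDen d ((α + σ) • x) (α • x₀) σ) / σ ^ 2) • (α • x₀ - (α + σ) • x)
      = ((α + σ) ^ 2) ^ (-(d : ℝ) / 2) •
          ((α / σ ^ 2) • (∫ x₁, fmWeight d p₀ (α / (α + σ)) x x₁ • (x₁ - x))
            - (1 / σ) • fmMarginal d p₀ (α / (α + σ)) x • x) := by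
  set C := ((α + σ) ^ 2) ^ (-(d : ℝ) / 2)
  set W := fmWeight d p₀ (α / (α + σ)) x
  -- `α x₀ − (α+σ) x = α (x₀ − x) − σ x`
  have hsplit : ∀ x₀, ((p₀ x₀ * gaussDen d ((α + σ) • x) (α • x₀) σ) / σ ^ 2) •
      (α • x₀ - (α + σ) • x) = (C * α / σ ^ 2) • (W x₀ • (x₀ - x)) - (C / σ) • (W x₀ • x) := by
    intro x₀
    simp only [W, C, fmWeight]
    rw [gaussDen_diffusion_eq_flow hk]
    match_scalars <;> field_simp <;> ring
  have hI := integral_sub ((hWx.smul (C * α / σ ^ 2))) ((hW.smul_const x).smul (C / σ))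
  simp only [Pi.smul_apply] at hI
  rw [integral_congr_ae (ae_of_all _ hsplit), hI, integral_smul, integral_smul,
    integral_smul_const, fmMarginal_eq_integral_fmWeight]
  module

end

theorem stmt10_general {d : ℕ} (α σ : ℝ) (hα : 0 < α) (hσ : 0 < σ)
    (p₀ : EuclideanSpace ℝ (Fin d) → ℝ)
    (hqpos : ∀ x, 0 < fmMarginal d p₀ (1 / (1 + σ / α)) x)
    (hint : ∀ (t : ℝ) (x : EuclideanSpace ℝ (Fin d)),
      Integrable (fun x₁ =>
        (p₀ x₁ * gaussDen d x (t • x₁) (1 - t)) • (x₁ - (1 - t)⁻¹ • (x - t • x₁))))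
    -- differentiation under the integral sign for the score of `p_τ`
    (hgrad : ∀ y, HasGradientAt (diffMarginal d p₀ α σ)
      (∫ x₀, ((p₀ x₀ * gaussDen d y (α • x₀) σ) / σ ^ 2) • (α • x₀ - y)) y) :
    ∀ x : EuclideanSpace ℝ (Fin d),
      (1 - 1 / (1 + σ / α)) • fmVelocity d p₀ (1 / (1 + σ / α)) x
        = (σ / α) •
            (x + σ • ((diffMarginal d p₀ α σ ((α + σ) • x))⁻¹ •
              gradient (diffMarginal d p₀ α σ) ((α + σ) • x))) := by
  intro x
  have hk : α + σ ≠ 0 := by positivity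
  have ht_eq : 1 / (1 + σ / α) = α / (α + σ) := by rw [one_add_div hα.ne', one_div_div]
  have ht : α / (α + σ) ≠ 1 := by
    rw [Ne, div_eq_one_iff_eq hk]
    linarith
  rw [ht_eq] at hqpos ⊢
  have hq := (hqpos x).ne'
  have hW := Integrable.of_integral_ne_zero hq
  have hWx := (integrable_fmVelocity_integrand_iff p₀ ht x).mp (hint _ x)
  rw [smul_fmVelocity p₀ ht, (hgrad _).gradient, integral_diffusion_score_eq p₀ hσ.ne' hk x hW hWx,
    diffMarginal_smul_eq_fmMarginal p₀ hk]
  have hC : ((α + σ) ^ 2) ^ (-(d : ℝ) / 2) ≠ 0 := by positivity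
  match_scalars <;> field_simp <;> ring

/-- Diffusion-to-flow transformation (Theorem 1): with `t = 1/(1 + σ_τ/ᾱ_τ)`,
`(1−t) v*(x,t) = (σ_τ/ᾱ_τ)(x + σ_τ ∇ log p_τ((ᾱ_τ + σ_τ)x))`. -/
theorem stmt10 {d : ℕ} (α σ : ℝ) (hα : 0 < α) (hσ : 0 < σ)
    (p₀ : EuclideanSpace ℝ (Fin d) → ℝ)
    (hp₀ : ∀ y, 0 < p₀ y) (hprob : ∫ y, p₀ y = 1)
    (hmom : Integrable (fun y => p₀ y • y))
    (hppos : ∀ y, 0 < diffMarginal d p₀ α σ y)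
    (hqpos : ∀ x, 0 < fmMarginal d p₀ (1 / (1 + σ / α)) x)
    (hint : ∀ (t : ℝ) (x : EuclideanSpace ℝ (Fin d)),
      Integrable (fun x₁ =>
        (p₀ x₁ * gaussDen d x (t • x₁) (1 - t)) • (x₁ - (1 - t)⁻¹ • (x - t • x₁))))
    -- differentiation under the integral sign for the score of `p_τ`
    (hgrad : ∀ y, HasGradientAt (diffMarginal d p₀ α σ)
      (∫ x₀, ((p₀ x₀ * gaussDen d y (α • x₀) σ) / σ ^ 2) • (α • x₀ - y)) y) :
    ∀ x : EuclideanSpace ℝ (Fin d),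
      (1 - 1 / (1 + σ / α)) • fmVelocity d p₀ (1 / (1 + σ / α)) x
        = (σ / α) •
            (x + σ • ((diffMarginal d p₀ α σ ((α + σ) • x))⁻¹ •
              gradient (diffMarginal d p₀ α σ) ((α + σ) • x))) :=
  stmt10_general α σ hα hσ p₀ hqpos hint hgrad
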